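/- If s ∈ S(t), then the new shortest-path distance from s to t is realized through the updated edge: d'(s,t) = d(s,u) + ω'(u,v) + d(v,t). In particular d(s,u) < ∞ and d(v,t) < ∞. -/

import Mathlib

open scoped BigOperators

/-- A directed graph on vertex set `V` with positive real edge weights. -/
structure WDigraph (V : Type*) where
  /-- the edge relation -/
  E : V → V → Prop
  /-- the edge weights -/
  w : V → V → ℝ
  /-- weights of edges are positive -/
  pos : ∀ a b, E a b → 0 < w a b

namespace WDigraph

variable {V : Type*} [Fintype V] [DecidableEq V]

/-- `p` is a simple path from `s` to `t` in `G`: a nonempty list of pairwise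
distinct vertices starting at `s`, ending at `t`, consecutive vertices joined
by edges. (Since all weights are positive, every shortest path is simple, so
it suffices to consider simple paths throughout.) -/
def IsPath (G : WDigraph V) (s t : V) (p : List V) : Prop :=
  List.Chain' G.E p ∧ p.head? = some s ∧ p.getLast? = some t ∧ p.Nodup

/-- The total weight of a list of vertices (sum of the weights of consecutive pairs). -/
def pw (G : WDigraph V) : List V → ℝ
  | [] => 0
  | [_] => 0
  | a :: b :: r => G.w a b + G.pw (b :: r)

/-- `d(s,t)`: shortest-path distance from `s` to `t`, equal to `⊤` (infinity)
if `t` is unreachable from `s`. -/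
noncomputable def dist (G : WDigraph V) (s t : V) : EReal :=
  sInf ((fun p => (G.pw p : EReal)) '' {p | G.IsPath s t p})

/-- The set of shortest `s`-`t` paths in `G`. -/
def SP (G : WDigraph V) (s t : V) : Set (List V) :=
  {p | G.IsPath s t p ∧ (G.pw p : EReal) = G.dist s t}

/-- `σ_{st}`: the number of shortest `s`-`t` paths in `G`. -/
noncomputable def sigma (G : WDigraph V) (s t : V) : ℕ :=
  (G.SP s t).ncard

/-- `σ_{st}(v)`: the number of shortest `s`-`t` paths in `G` that contain `v`. -/
noncomputable def sigmaV (G : WDigraph V) (s t v : V) : ℕ :=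
  {p ∈ G.SP s t | v ∈ p}.ncard

/-- `σ_{st}(v,w)`: the number of shortest `s`-`t` paths in `G` using the edge `(v,w)`. -/
noncomputable def sigmaE (G : WDigraph V) (s t v w : V) : ℕ :=
  {p ∈ G.SP s t | [v, w] <:+: p}.ncard

/-- `P_s(t)`: the set of predecessors of `t` with respect to source `s`:
nodes `y` with `(y,t) ∈ E` and `d(s,y) + ω(y,t) = d(s,t) < ∞`. -/
def pred (G : WDigraph V) (s t : V) : Set V :=
  {y | G.E y t ∧ G.dist s y + (G.w y t : EReal) = G.dist s t ∧ G.dist s t < ⊤}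

/-- `δ_{s•}(v)`: Brandes's one-sided dependency of `s` on `v`
(a summand is `0` whenever its denominator is `0`, which is automatic since
in Lean division by zero yields zero). -/
noncomputable def delta (G : WDigraph V) (s v : V) : ℝ :=
  ∑ᶠ t ∈ {t : V | t ≠ s ∧ t ≠ v}, (G.sigmaV s t v : ℝ) / (G.sigma s t : ℝ)

/-- `c_B(v)`: the betweenness centrality of `v`. -/
noncomputable def bc (G : WDigraph V) (v : V) : ℝ :=
  ∑ᶠ s ∈ {s : V | s ≠ v}, G.delta s v

/-- `G'` is obtained from `G` by the incremental update `(u, v, ω'(u,v))`: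
either a new edge `(u,v) ∉ E` is inserted with positive weight, or the weight
of the existing edge `(u,v)` is decreased; all other edges and weights are
unchanged. (Positivity of all weights is part of the `WDigraph` structure.) -/
structure IsUpdate (G G' : WDigraph V) (u v : V) : Prop where
  /-- the updated edge is present in `G'` -/
  edge' : G'.E u v
  /-- `E' = E ∪ {(u,v)}` -/
  edge_iff : ∀ a b, G'.E a b ↔ G.E a b ∨ a = u ∧ b = v
  /-- `ω'` agrees with `ω` on all edges other than `(u,v)` -/
  weight_eq : ∀ a b, ¬(a = u ∧ b = v) → G'.w a b = G.w a b
  /-- either an insertion of a new edge, or a weight decrease of an existing one -/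
  insert_or_decrease : ¬ G.E u v ∨ (G.E u v ∧ G'.w u v < G.w u v)

/-- `S(t)`: the affected sources of `t`. -/
def affS (G G' : WDigraph V) (t : V) : Set V :=
  {s | G.dist s t > G'.dist s t ∨ G.sigma s t ≠ G'.sigma s t}

/-- `T(s)`: the affected targets of `s`. -/
def affT (G G' : WDigraph V) (s : V) : Set V :=
  {t | G.dist s t > G'.dist s t ∨ G.sigma s t ≠ G'.sigma s t}

/-- `Δ_{s•}(v) = Σ_{t ∈ T(s), t ≠ v} σ_{st}(v)/σ_{st}`, computed in `G`
(`0`-convention for zero denominators). -/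
noncomputable def Delta (G G' : WDigraph V) (s v : V) : ℝ :=
  ∑ᶠ t ∈ {t : V | t ∈ affT G G' s ∧ t ≠ v}, (G.sigmaV s t v : ℝ) / (G.sigma s t : ℝ)

/-- `Δ'_{s•}(v) = Σ_{t ∈ T(s), t ≠ v} σ'_{st}(v)/σ'_{st}`, computed in `G'`
(`0`-convention for zero denominators). -/
noncomputable def Delta' (G G' : WDigraph V) (s v : V) : ℝ :=
  ∑ᶠ t ∈ {t : V | t ∈ affT G G' s ∧ t ≠ v}, (G'.sigmaV s t v : ℝ) / (G'.sigma s t : ℝ)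

/-!
If no shortest `s`-`t` path of `G'` used the edge `(u,v)`, each of them would be a path of `G`
of the same weight, while every path of `G` stays a path of `G'` and gets no heavier; so
neither `d(s,t)` nor the set of shortest `s`-`t` paths would change, and `s ∉ S(t)`.
Hence some shortest path of `G'` runs `s ⇝ u → v ⇝ t`. Being simple, its two halves avoid
`(u,v)`, so they are paths of `G` and `d'(s,t) ≥ d(s,u) + ω'(u,v) + d(v,t)`. The reverse
inequality is the triangle inequality through the edge `(u,v)` in `G'` together with `d' ≤ d`.
-/

end WDigraph

theorem List.exists_eq_append_cons_append_cons_of_not_nodup {α : Type*} :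
    ∀ {l : List α}, ¬ l.Nodup →
      ∃ (a : List α) (x : α) (b c : List α), l = a ++ x :: b ++ x :: c
  | [], hl => absurd List.nodup_nil hl
  | y :: l, hl => by
    rw [List.nodup_cons, not_and_or, not_not] at hl
    rcases hl with hy | hl
    · obtain ⟨b, c, rfl⟩ := List.append_of_mem hy
      exact ⟨[], y, b, c, rfl⟩
    · obtain ⟨a, x, b, c, rfl⟩ := List.exists_eq_append_cons_append_cons_of_not_nodup hl
      exact ⟨y :: a, x, b, c, rfl⟩

namespace WDigraph

variable {V : Type*}

section Paths

variable (G : WDigraph V)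

theorem pw_append_cons (x : V) (b : List V) :
    ∀ a : List V, G.pw (a ++ x :: b) = G.pw (a ++ [x]) + G.pw (x :: b)
  | [] => by simp [pw]
  | [y] => by simp [pw]
  | y :: z :: a => by
    have ih := pw_append_cons x b (z :: a)
    simp only [List.cons_append] at ih ⊢
    rw [pw, ih, pw, add_assoc]

theorem pw_append_cons_cons (a b : List V) (x y : V) :
    G.pw (a ++ x :: y :: b) = G.pw (a ++ [x]) + G.w x y + G.pw (y :: b) := by
  rw [pw_append_cons, pw, add_assoc]

theorem pw_nonneg : ∀ {l : List V}, l.IsChain G.E → 0 ≤ G.pw l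
  | [], _ | [_], _ => le_rfl
  | a :: b :: r, hc => by
    rw [List.isChain_cons_cons] at hc
    have := G.pos a b hc.1
    have := pw_nonneg hc.2
    rw [pw]; linarith

theorem pw_le_of_isChain_append_cons_append_cons {a b c : List V} {x : V}
    (hc : (a ++ x :: b ++ x :: c).IsChain G.E) :
    G.pw (a ++ x :: c) ≤ G.pw (a ++ x :: b ++ x :: c) := by
  have hcycle : (x :: b ++ [x]).IsChain G.E := hc.infix ⟨a, c, by simp⟩
  rw [List.append_assoc, List.cons_append, pw_append_cons G x c a,
    pw_append_cons G x (b ++ x :: c) a, ← List.cons_append, pw_append_cons G x c (x :: b)]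
  linarith [G.pw_nonneg hcycle]

theorem finite_setOf_isPath [Fintype V] (s t : V) : {p | G.IsPath s t p}.Finite :=
  (List.finite_length_le V (Fintype.card V)).subset fun _ hp => hp.2.2.2.length_le_card

variable {G} {s t : V}

theorem dist_le_pw {p : List V} (hp : G.IsPath s t p) : G.dist s t ≤ G.pw p :=
  sInf_le ⟨p, hp, rfl⟩

theorem dist_nonneg : 0 ≤ G.dist s t :=
  le_sInf <| by rintro _ ⟨p, hp, rfl⟩; exact EReal.coe_nonneg.2 (G.pw_nonneg hp.1)

theorem dist_ne_bot : G.dist s t ≠ ⊥ :=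
  ne_bot_of_le_ne_bot EReal.zero_ne_bot dist_nonneg

theorem dist_eq_top_or_exists_mem_SP [Fintype V] (s t : V) :
    G.dist s t = ⊤ ∨ ∃ p, p ∈ G.SP s t := by
  rcases Set.eq_empty_or_nonempty {p | G.IsPath s t p} with hempty | ⟨p, hp⟩
  · left
    rw [dist, hempty, Set.image_empty, sInf_empty]
  · right
    obtain ⟨q, hq, hqd⟩ := (Set.Nonempty.image _ ⟨p, hp⟩).csInf_mem
      ((G.finite_setOf_isPath s t).image fun p => (G.pw p : EReal))
    exact ⟨q, hq, hqd⟩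

theorem exists_isPath_pw_le {p : List V} (hp : p.IsChain G.E) (hs : p.head? = some s)
    (ht : p.getLast? = some t) : ∃ q, G.IsPath s t q ∧ G.pw q ≤ G.pw p := by
  induction hn : p.length using Nat.strong_induction_on generalizing p with
  | _ n ih =>
    by_cases hnd : p.Nodup
    · exact ⟨p, ⟨hp, hs, ht, hnd⟩, le_rfl⟩
    obtain ⟨a, x, b, c, rfl⟩ := List.exists_eq_append_cons_append_cons_of_not_nodup hnd
    have hshort : (a ++ x :: c).IsChain G.E :=
      List.isChain_split.2
        ⟨hp.infix ⟨[], b ++ x :: c, by simp⟩, hp.infix ⟨a ++ x :: b, [], by simp⟩⟩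
    obtain ⟨q, hq, hle⟩ := ih (a ++ x :: c).length (by simp at hn ⊢; omega) hshort
      (by cases a <;> simpa using hs) (by rw [List.getLast?_append_cons] at ht ⊢; exact ht) rfl
    exact ⟨q, hq, hle.trans (G.pw_le_of_isChain_append_cons_append_cons hp)⟩

theorem dist_le_pw_of_isChain {p : List V} (hp : p.IsChain G.E) (hs : p.head? = some s)
    (ht : p.getLast? = some t) : G.dist s t ≤ G.pw p := by
  obtain ⟨q, hq, hle⟩ := exists_isPath_pw_le hp hs ht
  exact (dist_le_pw hq).trans (EReal.coe_le_coe hle)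

theorem dist_le_dist_add_w_add_dist [Fintype V] {u v : V} (huv : G.E u v) (s t : V) :
    G.dist s t ≤ G.dist s u + G.w u v + G.dist v t := by
  rcases dist_eq_top_or_exists_mem_SP (G := G) s u with hsu | ⟨q₁, hq₁, hq₁d⟩
  · simp [hsu, EReal.top_add_of_ne_bot, dist_ne_bot]
  rcases dist_eq_top_or_exists_mem_SP (G := G) v t with hvt | ⟨q₂, hq₂, hq₂d⟩
  · simp [hvt, EReal.add_top_of_ne_bot, dist_ne_bot]
  obtain ⟨a, rfl⟩ := List.getLast?_eq_some_iff.1 hq₁.2.2.1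
  obtain ⟨b, rfl⟩ := List.head?_eq_some_iff.1 hq₂.2.1
  calc G.dist s t ≤ G.pw (a ++ u :: v :: b) :=
        dist_le_pw_of_isChain (List.isChain_append_cons_cons.2 ⟨hq₁.1, huv, hq₂.1⟩)
          (by cases a <;> simpa using hq₁.2.1) (by simpa using hq₂.2.2.1)
    _ = G.dist s u + G.w u v + G.dist v t := by
        rw [pw_append_cons_cons, ← hq₁d, ← hq₂d]; push_cast; rfl

theorem IsPath.of_append_cons_cons {a b : List V} {u v : V}
    (hp : G.IsPath s t (a ++ u :: v :: b)) :
    G.IsPath s u (a ++ [u]) ∧ G.IsPath v t (v :: b) := by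
  obtain ⟨hc, hs, ht, hnd⟩ := hp
  obtain ⟨hca, -, hcb⟩ := List.isChain_append_cons_cons.1 hc
  exact ⟨⟨hca, by cases a <;> simpa using hs, by simp, hnd.sublist (by simp)⟩,
    ⟨hcb, rfl, by simpa using ht, hnd.sublist (by simp)⟩⟩

end Paths

namespace IsUpdate

variable {G G' : WDigraph V} {u v : V}

theorem isChain (h : IsUpdate G G' u v) {l : List V} (hl : l.IsChain G.E) : l.IsChain G'.E :=
  hl.imp fun a b hab => (h.edge_iff a b).2 (Or.inl hab)

theorem isChain_of_not_infix (h : IsUpdate G G' u v) {l : List V} (hl : ¬ [u, v] <:+: l)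
    (hc : l.IsChain G'.E) : l.IsChain G.E := by
  refine List.isChain_iff_forall_rel_of_append_cons_cons.2 fun a b l₁ l₂ hl' => ?_
  have hab' := List.isChain_iff_forall_rel_of_append_cons_cons.1 hc hl'
  refine ((h.edge_iff a b).1 hab').resolve_right ?_
  rintro ⟨rfl, rfl⟩
  exact hl ⟨l₁, l₂, by simp [hl']⟩

theorem pw_le (h : IsUpdate G G' u v) : ∀ {l : List V}, l.IsChain G.E → G'.pw l ≤ G.pw l
  | [], _ | [_], _ => le_rfl
  | a :: b :: r, hc => by
    rw [List.isChain_cons_cons] at hc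
    have hw : G'.w a b ≤ G.w a b := by
      by_cases hab : a = u ∧ b = v
      · obtain ⟨rfl, rfl⟩ := hab
        exact (h.insert_or_decrease.resolve_left (not_not.2 hc.1)).2.le
      · exact (h.weight_eq a b hab).le
    have := h.pw_le hc.2
    rw [pw, pw]; linarith

theorem pw_eq_of_not_infix (h : IsUpdate G G' u v) :
    ∀ {l : List V}, ¬ [u, v] <:+: l → G'.pw l = G.pw l
  | [], _ | [_], _ => rfl
  | a :: b :: r, hl => by
    have hab : ¬ (a = u ∧ b = v) := by
      rintro ⟨rfl, rfl⟩
      exact hl ⟨[], r, rfl⟩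
    rw [pw, pw, h.weight_eq a b hab, h.pw_eq_of_not_infix fun hi => hl (List.infix_cons hi)]

variable {s t : V}

theorem isPath (h : IsUpdate G G' u v) {p : List V} (hp : G.IsPath s t p) : G'.IsPath s t p :=
  ⟨h.isChain hp.1, hp.2⟩

theorem isPath_of_not_infix (h : IsUpdate G G' u v) {p : List V} (hl : ¬ [u, v] <:+: p)
    (hp : G'.IsPath s t p) : G.IsPath s t p :=
  ⟨h.isChain_of_not_infix hl hp.1, hp.2⟩

theorem dist_le (h : IsUpdate G G' u v) (s t : V) : G'.dist s t ≤ G.dist s t :=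
  le_sInf <| by
    rintro _ ⟨p, hp, rfl⟩
    exact (dist_le_pw (h.isPath hp)).trans (EReal.coe_le_coe (h.pw_le hp.1))

theorem dist_eq_of_forall_not_infix [Fintype V] (h : IsUpdate G G' u v)
    (hno : ∀ p ∈ G'.SP s t, ¬ [u, v] <:+: p) : G.dist s t = G'.dist s t := by
  refine le_antisymm ?_ (h.dist_le s t)
  rcases dist_eq_top_or_exists_mem_SP (G := G') s t with htop | ⟨p, hp⟩
  · exact htop ▸ le_top
  calc G.dist s t ≤ G.pw p := dist_le_pw (h.isPath_of_not_infix (hno p hp) hp.1)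
    _ = G'.dist s t := by rw [← h.pw_eq_of_not_infix (hno p hp), hp.2]

theorem SP_eq_of_forall_not_infix [Fintype V] (h : IsUpdate G G' u v)
    (hno : ∀ p ∈ G'.SP s t, ¬ [u, v] <:+: p) : G.SP s t = G'.SP s t := by
  have hd := h.dist_eq_of_forall_not_infix hno
  ext p
  refine ⟨fun ⟨hp, hpd⟩ => ⟨h.isPath hp, le_antisymm ?_ (dist_le_pw (h.isPath hp))⟩,
    fun hp' => ⟨h.isPath_of_not_infix (hno p hp') hp'.1, ?_⟩⟩
  · exact hd ▸ hpd ▸ EReal.coe_le_coe (h.pw_le hp.1)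
  · rw [← h.pw_eq_of_not_infix (hno p hp'), hp'.2, hd]

theorem exists_mem_SP_infix_of_mem_affS [Fintype V] (h : IsUpdate G G' u v)
    (hs : s ∈ affS G G' t) :
    ∃ p ∈ G'.SP s t, [u, v] <:+: p := by
  by_contra! hno
  rcases hs with hd | hσ
  · exact hd.ne' (h.dist_eq_of_forall_not_infix hno)
  · exact hσ (congrArg Set.ncard (h.SP_eq_of_forall_not_infix hno))

end IsUpdate

variable [Fintype V] [DecidableEq V]

/-- If `s ∈ S(t)`, then the new shortest-path distance from `s` to `t`
is realized through the updated edge: `d'(s,t) = d(s,u) + ω'(u,v) + d(v,t)`.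
In particular `d(s,u) < ∞` and `d(v,t) < ∞`. -/
theorem dist'_eq_through_updated_edge (G G' : WDigraph V) (u v : V)
    (h : IsUpdate G G' u v) (s t : V) (hs : s ∈ affS G G' t) :
    G'.dist s t = G.dist s u + (G'.w u v : EReal) + G.dist v t ∧
      G.dist s u < ⊤ ∧ G.dist v t < ⊤ := by
  obtain ⟨p, ⟨hp, hpd⟩, a, b, rfl⟩ := h.exists_mem_SP_infix_of_mem_affS hs
  rw [show a ++ [u, v] ++ b = a ++ u :: v :: b by simp] at hp hpd
  have hnd : (a ++ [u] ++ v :: b).Nodup := by simpa using hp.2.2.2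
  have hdisj := (List.nodup_append.1 hnd).2.2
  have hpre : ¬ [u, v] <:+: a ++ [u] := fun hi => hdisj v (hi.subset (by simp)) v (by simp) rfl
  have hsuf : ¬ [u, v] <:+: v :: b := fun hi => hdisj u (by simp) u (hi.subset (by simp)) rfl
  obtain ⟨hsu, hvt⟩ := hp.of_append_cons_cons
  replace hsu := h.isPath_of_not_infix hpre hsu
  replace hvt := h.isPath_of_not_infix hsuf hvt
  have hge : G.dist s u + G'.w u v + G.dist v t ≤ G'.dist s t := by
    rw [← hpd, G'.pw_append_cons_cons, h.pw_eq_of_not_infix hpre, h.pw_eq_of_not_infix hsuf]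
    push_cast
    exact add_le_add (add_le_add_left (dist_le_pw hsu) _) (dist_le_pw hvt)
  have hle : G'.dist s t ≤ G.dist s u + G'.w u v + G.dist v t :=
    (G'.dist_le_dist_add_w_add_dist h.edge' s t).trans
      (add_le_add (add_le_add_left (h.dist_le s u) _) (h.dist_le v t))
  exact ⟨hle.antisymm hge, (dist_le_pw hsu).trans_lt (EReal.coe_lt_top _),
    (dist_le_pw hvt).trans_lt (EReal.coe_lt_top _)⟩

end WDigraph
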